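/- arXiv:2410.03052 — 5 statements merged into one kernel-verified Lean document; each statement's English description precedes it below -/
import Mathlib

section
/- Let D be an m × n real cost matrix satisfying the Monge property, let a ∈ Δ_m and b ∈ Δ_n be weight vectors, and let P be a feasible transport plan for (a, b) whose support is monotone (non-crossing). Then P is an optimal transport plan: for every feasible transport plan Q for (a, b), Σ_{i,j} P_{ij} D_{ij} ≤ Σ_{i,j} Q_{ij} D_{ij}. -/
open Finset

/-- Extension of a matrix to all of ℕ × ℕ by zero. -/
private def extM {m n : ℕ} (M : Matrix (Fin m) (Fin n) ℝ) (i j : ℕ) : ℝ :=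
  if h : i < m ∧ j < n then M ⟨i, h.1⟩ ⟨j, h.2⟩ else 0

private lemma extM_lt {m n : ℕ} (M : Matrix (Fin m) (Fin n) ℝ) {i j : ℕ}
    (hi : i < m) (hj : j < n) : extM M i j = M ⟨i, hi⟩ ⟨j, hj⟩ :=
  dif_pos ⟨hi, hj⟩

private lemma extM_zero {m n : ℕ} (M : Matrix (Fin m) (Fin n) ℝ) {i j : ℕ}
    (h : m ≤ i ∨ n ≤ j) : extM M i j = 0 :=
  dif_neg (by omega)

private lemma sum_extM_cost {m n : ℕ} (M D : Matrix (Fin m) (Fin n) ℝ) :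
    ∑ i, ∑ j, M i j * D i j
      = ∑ i ∈ range m, ∑ j ∈ range n, extM M i j * extM D i j := by
  rw [← Fin.sum_univ_eq_sum_range (fun i => ∑ j ∈ range n, extM M i j * extM D i j) m]
  refine Finset.sum_congr rfl fun i _ => ?_
  rw [← Fin.sum_univ_eq_sum_range (fun j => extM M (i : ℕ) j * extM D (i : ℕ) j) n]
  refine Finset.sum_congr rfl fun j _ => ?_
  rw [extM_lt M i.isLt j.isLt, extM_lt D i.isLt j.isLt]

private lemma row_extM {m n : ℕ} (M : Matrix (Fin m) (Fin n) ℝ) {i : ℕ} (hi : i < m) :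
    ∑ j ∈ range n, extM M i j = ∑ j, M ⟨i, hi⟩ j := by
  rw [← Fin.sum_univ_eq_sum_range (fun j => extM M i j) n]
  exact Finset.sum_congr rfl fun j _ => by rw [extM_lt M hi j.isLt]

private lemma col_extM {m n : ℕ} (M : Matrix (Fin m) (Fin n) ℝ) {j : ℕ} (hj : j < n) :
    ∑ i ∈ range m, extM M i j = ∑ i, M i ⟨j, hj⟩ := by
  rw [← Fin.sum_univ_eq_sum_range (fun i => extM M i j) m]
  exact Finset.sum_congr rfl fun i _ => by rw [extM_lt M i.isLt hj]

/-- Triangular sum reindexing. -/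
private lemma tri_swap {β : Type*} [AddCommMonoid β] (N : ℕ) (f : ℕ → ℕ → β) :
    ∑ i ∈ range N, ∑ i' ∈ range (i + 1), f i i'
      = ∑ i' ∈ range N, ∑ i ∈ Ico i' N, f i i' := by
  refine Finset.sum_comm' ?_
  intro x y
  simp only [mem_range, mem_Ico, Nat.lt_succ_iff]
  omega

/-- Telescoping sum over an interval. -/
private lemma tele_sum (g : ℕ → ℝ) {a b : ℕ} (h : a ≤ b) :
    ∑ j ∈ Ico a b, (g j - g (j + 1)) = g a - g b := by
  rw [Finset.sum_Ico_eq_sub _ h, Finset.sum_range_sub' g, Finset.sum_range_sub' g]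
  ring

/-- Two-dimensional summation by parts: the transport cost expressed through the
cumulative distribution of the plan. -/
private lemma sum_by_parts {m n : ℕ} (M d : ℕ → ℕ → ℝ)
    (hd : ∀ i j, m ≤ i ∨ n ≤ j → d i j = 0) :
    ∑ i ∈ range m, ∑ j ∈ range n, M i j * d i j
      = ∑ i ∈ range m, ∑ j ∈ range n,
          (∑ i' ∈ range (i + 1), ∑ j' ∈ range (j + 1), M i' j') *
          ((d i j - d i (j + 1)) - (d (i + 1) j - d (i + 1) (j + 1))) := by
  set E : ℕ → ℕ → ℝ :=
    fun i j => (d i j - d i (j + 1)) - (d (i + 1) j - d (i + 1) (j + 1)) with hE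
  have tele : ∀ i' j', i' < m → j' < n →
      ∑ i ∈ Ico i' m, ∑ j ∈ Ico j' n, E i j = d i' j' := by
    intro i' j' hi hj
    have inner : ∀ i, ∑ j ∈ Ico j' n, E i j = d i j' - d (i + 1) j' := by
      intro i
      have h1 : ∀ j, E i j
          = (fun j => d i j - d (i + 1) j) j - (fun j => d i j - d (i + 1) j) (j + 1) := by
        intro j; simp only [hE]; ring
      rw [Finset.sum_congr rfl (fun j _ => h1 j), tele_sum _ hj.le]
      rw [hd i n (Or.inr le_rfl), hd (i + 1) n (Or.inr le_rfl)]
      ring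
    rw [Finset.sum_congr rfl (fun i _ => inner i), tele_sum (fun i => d i j') hi.le,
      hd m j' (Or.inl le_rfl)]
    ring
  symm
  calc
    ∑ i ∈ range m, ∑ j ∈ range n,
        (∑ i' ∈ range (i + 1), ∑ j' ∈ range (j + 1), M i' j') * E i j
      = ∑ i ∈ range m, ∑ j ∈ range n,
          ∑ i' ∈ range (i + 1), ∑ j' ∈ range (j + 1), M i' j' * E i j := by
        refine Finset.sum_congr rfl fun i _ => Finset.sum_congr rfl fun j _ => ?_
        rw [Finset.sum_mul]
        exact Finset.sum_congr rfl fun i' _ => Finset.sum_mul _ _ _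
    _ = ∑ i ∈ range m, ∑ i' ∈ range (i + 1), ∑ j ∈ range n,
          ∑ j' ∈ range (j + 1), M i' j' * E i j := by
        exact Finset.sum_congr rfl fun i _ => Finset.sum_comm
    _ = ∑ i' ∈ range m, ∑ i ∈ Ico i' m, ∑ j ∈ range n,
          ∑ j' ∈ range (j + 1), M i' j' * E i j := by
        exact tri_swap m _
    _ = ∑ i' ∈ range m, ∑ i ∈ Ico i' m, ∑ j' ∈ range n,
          ∑ j ∈ Ico j' n, M i' j' * E i j := by
        refine Finset.sum_congr rfl fun i' _ => Finset.sum_congr rfl fun i _ => ?_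
        exact tri_swap n (fun j j' => M i' j' * E i j)
    _ = ∑ i' ∈ range m, ∑ j' ∈ range n, ∑ i ∈ Ico i' m,
          ∑ j ∈ Ico j' n, M i' j' * E i j := by
        exact Finset.sum_congr rfl fun i' _ => Finset.sum_comm
    _ = ∑ i' ∈ range m, ∑ j' ∈ range n, M i' j' *
          (∑ i ∈ Ico i' m, ∑ j ∈ Ico j' n, E i j) := by
        refine Finset.sum_congr rfl fun i' _ => Finset.sum_congr rfl fun j' _ => ?_
        rw [Finset.mul_sum]
        exact Finset.sum_congr rfl fun i _ => (Finset.mul_sum _ _ _).symm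
    _ = ∑ i ∈ range m, ∑ j ∈ range n, M i j * d i j := by
        refine Finset.sum_congr rfl fun i' hi' => Finset.sum_congr rfl fun j' hj' => ?_
        rw [tele i' j' (mem_range.mp hi') (mem_range.mp hj')]

/-- If the cost matrix `D` satisfies the Monge property and `P` is a feasible
transport plan for `(a, b)` with monotone (non-crossing) support, then `P` is optimal: its
cost is at most that of any other feasible plan `Q`. -/
theorem monotone_plan_optimal_of_monge {m n : ℕ}
    (D : Matrix (Fin m) (Fin n) ℝ)
    (hMonge : ∀ (i₁ i₂ : Fin m) (j₁ j₂ : Fin n), i₁ < i₂ → j₁ < j₂ →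
      D i₁ j₁ + D i₂ j₂ ≤ D i₁ j₂ + D i₂ j₁)
    (a : Fin m → ℝ) (b : Fin n → ℝ)
    (ha0 : ∀ i, 0 ≤ a i) (hb0 : ∀ j, 0 ≤ b j)
    (ha1 : ∑ i, a i = 1) (hb1 : ∑ j, b j = 1)
    (P : Matrix (Fin m) (Fin n) ℝ)
    (hP0 : ∀ i j, 0 ≤ P i j)
    (hProw : ∀ i, ∑ j, P i j = a i) (hPcol : ∀ j, ∑ i, P i j = b j)
    (hPmono : ¬ ∃ (i₁ i₂ : Fin m) (j₁ j₂ : Fin n),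
      i₁ < i₂ ∧ j₁ < j₂ ∧ 0 < P i₁ j₂ ∧ 0 < P i₂ j₁)
    (Q : Matrix (Fin m) (Fin n) ℝ)
    (hQ0 : ∀ i j, 0 ≤ Q i j)
    (hQrow : ∀ i, ∑ j, Q i j = a i) (hQcol : ∀ j, ∑ i, Q i j = b j) :
    ∑ i, ∑ j, P i j * D i j ≤ ∑ i, ∑ j, Q i j * D i j := by
  classical
  set p : ℕ → ℕ → ℝ := extM P with hp
  set q : ℕ → ℕ → ℝ := extM Q with hq
  set d : ℕ → ℕ → ℝ := extM D with hdd
  have hp0 : ∀ i j, 0 ≤ p i j := by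
    intro i j
    by_cases h : i < m ∧ j < n
    · rw [hp, extM_lt P h.1 h.2]; exact hP0 _ _
    · rw [hp, extM_zero P (by omega)]
  have hq0 : ∀ i j, 0 ≤ q i j := by
    intro i j
    by_cases h : i < m ∧ j < n
    · rw [hq, extM_lt Q h.1 h.2]; exact hQ0 _ _
    · rw [hq, extM_zero Q (by omega)]
  -- equal row and column sums
  have hrow_eq : ∀ i' < m, ∑ j' ∈ range n, p i' j' = ∑ j' ∈ range n, q i' j' := by
    intro i' hi'
    rw [hp, hq, row_extM P hi', row_extM Q hi', hProw, hQrow]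
  have hcol_eq : ∀ j' < n, ∑ i' ∈ range m, p i' j' = ∑ i' ∈ range m, q i' j' := by
    intro j' hj'
    rw [hp, hq, col_extM P hj', col_extM Q hj', hPcol, hQcol]
  -- boundary equality of cumulative sums
  have hFj : ∀ i < m, ∀ j : ℕ, j + 1 = n →
      ∑ i' ∈ range (i + 1), ∑ j' ∈ range (j + 1), p i' j'
        = ∑ i' ∈ range (i + 1), ∑ j' ∈ range (j + 1), q i' j' := by
    intro i hi j hjn
    refine Finset.sum_congr rfl fun i' hi' => ?_
    have hi'm : i' < m := lt_of_le_of_lt (Nat.lt_succ_iff.mp (mem_range.mp hi')) hi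
    rw [hjn]
    exact hrow_eq i' hi'm
  have hFi : ∀ j < n, ∀ i : ℕ, i + 1 = m →
      ∑ i' ∈ range (i + 1), ∑ j' ∈ range (j + 1), p i' j'
        = ∑ i' ∈ range (i + 1), ∑ j' ∈ range (j + 1), q i' j' := by
    intro j hj i him
    rw [Finset.sum_comm]
    conv_rhs => rw [Finset.sum_comm]
    rw [him]
    refine Finset.sum_congr rfl fun j' hj' => ?_
    have hj'n : j' < n := lt_of_le_of_lt (Nat.lt_succ_iff.mp (mem_range.mp hj')) hj
    exact hcol_eq j' hj'n
  -- the cumulative sums of P dominate those of Q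
  have hFle : ∀ i < m, ∀ j < n,
      ∑ i' ∈ range (i + 1), ∑ j' ∈ range (j + 1), q i' j'
        ≤ ∑ i' ∈ range (i + 1), ∑ j' ∈ range (j + 1), p i' j' := by
    intro i hi j hj
    by_cases hT : ∑ i' ∈ range (i + 1), ∑ j' ∈ Ico (j + 1) n, p i' j' = 0
    · -- row-saturated case: F_P = A_i
      have hA : ∑ i' ∈ range (i + 1), ∑ j' ∈ range (j + 1), p i' j'
          = ∑ i' ∈ range (i + 1), ∑ j' ∈ range n, p i' j' := by
        calc ∑ i' ∈ range (i + 1), ∑ j' ∈ range (j + 1), p i' j'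
            = ∑ i' ∈ range (i + 1), (∑ j' ∈ range (j + 1), p i' j'
                + ∑ j' ∈ Ico (j + 1) n, p i' j') := by
              rw [Finset.sum_add_distrib, hT, add_zero]
          _ = ∑ i' ∈ range (i + 1), ∑ j' ∈ range n, p i' j' := by
              refine Finset.sum_congr rfl fun i' _ => ?_
              exact Finset.sum_range_add_sum_Ico _ hj
      rw [hA]
      refine Finset.sum_le_sum fun i' hi' => ?_
      have hi'm : i' < m := lt_of_le_of_lt (Nat.lt_succ_iff.mp (mem_range.mp hi')) hi
      calc ∑ j' ∈ range (j + 1), q i' j'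
          ≤ ∑ j' ∈ range n, q i' j' := by
            refine Finset.sum_le_sum_of_subset_of_nonneg
              (Finset.range_subset_range.mpr hj) fun j' _ _ => hq0 i' j'
        _ = ∑ j' ∈ range n, p i' j' := (hrow_eq i' hi'm).symm
    · -- there is mass strictly right of column j in rows ≤ i
      obtain ⟨i₁, hi₁, h1⟩ := Finset.exists_ne_zero_of_sum_ne_zero hT
      obtain ⟨j₂, hj₂, h2⟩ := Finset.exists_ne_zero_of_sum_ne_zero h1
      rw [mem_range, Nat.lt_succ_iff] at hi₁
      rw [mem_Ico] at hj₂
      have hpos1 : 0 < p i₁ j₂ := lt_of_le_of_ne (hp0 i₁ j₂) (Ne.symm h2)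
      by_cases hU : ∑ i' ∈ Ico (i + 1) m, ∑ j' ∈ range (j + 1), p i' j' = 0
      · -- column-saturated case: F_P = B_j
        have hB : ∑ i' ∈ range (i + 1), ∑ j' ∈ range (j + 1), p i' j'
            = ∑ i' ∈ range m, ∑ j' ∈ range (j + 1), p i' j' := by
          rw [← Finset.sum_range_add_sum_Ico
            (fun i' => ∑ j' ∈ range (j + 1), p i' j') hi, hU, add_zero]
        rw [hB]
        conv_lhs => rw [Finset.sum_comm]
        conv_rhs => rw [Finset.sum_comm]
        refine Finset.sum_le_sum fun j' hj' => ?_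
        have hj'n : j' < n := lt_of_le_of_lt (Nat.lt_succ_iff.mp (mem_range.mp hj')) hj
        calc ∑ i' ∈ range (i + 1), q i' j'
            ≤ ∑ i' ∈ range m, q i' j' := by
              refine Finset.sum_le_sum_of_subset_of_nonneg
                (Finset.range_subset_range.mpr hi) fun i' _ _ => hq0 i' j'
          _ = ∑ i' ∈ range m, p i' j' := (hcol_eq j' hj'n).symm
      · -- both: crossing, contradiction
        exfalso
        obtain ⟨i₂, hi₂, h3⟩ := Finset.exists_ne_zero_of_sum_ne_zero hU
        obtain ⟨j₁, hj₁, h4⟩ := Finset.exists_ne_zero_of_sum_ne_zero h3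
        rw [mem_Ico] at hi₂
        rw [mem_range, Nat.lt_succ_iff] at hj₁
        have hpos2 : 0 < p i₂ j₁ := lt_of_le_of_ne (hp0 i₂ j₁) (Ne.symm h4)
        have hi₁m : i₁ < m := lt_of_le_of_lt (lt_of_le_of_lt hi₁ (Nat.lt_succ_self i)).le
          (by omega)
        have hj₁n : j₁ < n := by omega
        refine hPmono ⟨⟨i₁, by omega⟩, ⟨i₂, hi₂.2⟩, ⟨j₁, hj₁n⟩, ⟨j₂, hj₂.2⟩,
          ?_, ?_, ?_, ?_⟩
        · exact Fin.mk_lt_mk.mpr (by omega)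
        · exact Fin.mk_lt_mk.mpr (by omega)
        · rw [hp, extM_lt P (by omega) hj₂.2] at hpos1; exact hpos1
        · rw [hp, extM_lt P hi₂.2 hj₁n] at hpos2; exact hpos2
  -- the second difference of D is nonpositive (Monge)
  have hEle : ∀ i j : ℕ, i + 1 < m → j + 1 < n →
      (d i j - d i (j + 1)) - (d (i + 1) j - d (i + 1) (j + 1)) ≤ 0 := by
    intro i j hi hj
    have h := hMonge ⟨i, by omega⟩ ⟨i + 1, hi⟩ ⟨j, by omega⟩ ⟨j + 1, hj⟩
      (Fin.mk_lt_mk.mpr (Nat.lt_succ_self i)) (Fin.mk_lt_mk.mpr (Nat.lt_succ_self j))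
    rw [hdd, extM_lt D (by omega) (by omega), extM_lt D (by omega) hj,
      extM_lt D hi (by omega), extM_lt D hi hj]
    linarith
  -- put everything together
  rw [sum_extM_cost P D, sum_extM_cost Q D, ← hp, ← hq, ← hdd,
    sum_by_parts p d (fun i j h => by rw [hdd]; exact extM_zero D h),
    sum_by_parts q d (fun i j h => by rw [hdd]; exact extM_zero D h)]
  refine Finset.sum_le_sum fun i hi => Finset.sum_le_sum fun j hj => ?_
  rw [mem_range] at hi hj
  by_cases hil : i + 1 = m
  · rw [hFi j hj i hil]
  by_cases hjl : j + 1 = n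
  · rw [hFj i hi j hjl]
  exact mul_le_mul_of_nonpos_right (hFle i hi j hj)
    (hEle i j (by omega) (by omega))
end

section
/- For every pair of weight vectors a ∈ Δ_m and b ∈ Δ_n, there exists a feasible transport plan P for (a, b) whose support is monotone (non-crossing) and which has at most m + n − 1 nonzero entries. (This is the plan produced by the greedy northwest-corner flow matching algorithm.) -/
/-- Cumulative sum of a weight vector, extended by zero beyond its length. -/
private noncomputable def cumw (m : ℕ) (a : Fin m → ℝ) (i : ℕ) : ℝ :=
  ∑ k ∈ Finset.range i, if h : k < m then a ⟨k, h⟩ else 0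

private lemma cumw_zero (m : ℕ) (a : Fin m → ℝ) : cumw m a 0 = 0 := by
  simp [cumw]

private lemma cumw_succ (m : ℕ) (a : Fin m → ℝ) (i : Fin m) :
    cumw m a (i + 1) = cumw m a i + a i := by
  simp [cumw, Finset.sum_range_succ, i.2]

private lemma cumw_mono (m : ℕ) (a : Fin m → ℝ) (ha0 : ∀ i, 0 ≤ a i) :
    Monotone (cumw m a) := by
  apply monotone_nat_of_le_succ
  intro i
  rw [cumw, cumw, Finset.sum_range_succ]
  have : (0:ℝ) ≤ if h : i < m then a ⟨i, h⟩ else 0 := by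
    split_ifs with h
    · exact ha0 _
    · exact le_refl 0
  linarith

private lemma cumw_top (m : ℕ) (a : Fin m → ℝ) (ha1 : ∑ i, a i = 1) :
    cumw m a m = 1 := by
  rw [cumw, ← Fin.sum_univ_eq_sum_range (fun k => if h : k < m then a ⟨k, h⟩ else 0) m, ← ha1]
  exact Finset.sum_congr rfl fun i _ => by simp [i.2]

private lemma cumw_eq_one (m : ℕ) (a : Fin m → ℝ) (ha1 : ∑ i, a i = 1)
    {i : ℕ} (hi : m ≤ i) : cumw m a i = 1 := by
  rw [← cumw_top m a ha1, cumw, cumw,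
    ← Finset.sum_range_add_sum_Ico _ hi]
  have : ∑ k ∈ Finset.Ico m i, (if h : k < m then a ⟨k, h⟩ else 0) = 0 := by
    apply Finset.sum_eq_zero
    intro k hk
    rw [Finset.mem_Ico] at hk
    rw [dif_neg (by omega)]
  linarith

private lemma cumw_nonneg (m : ℕ) (a : Fin m → ℝ) (ha0 : ∀ i, 0 ≤ a i) (i : ℕ) :
    0 ≤ cumw m a i := by
  rw [← cumw_zero m a]
  exact cumw_mono m a ha0 (Nat.zero_le i)

private lemma cumw_le_one (m : ℕ) (a : Fin m → ℝ) (ha0 : ∀ i, 0 ≤ a i)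
    (ha1 : ∑ i, a i = 1) (i : ℕ) : cumw m a i ≤ 1 := by
  rcases le_total i m with h | h
  · rw [← cumw_top m a ha1]
    exact cumw_mono m a ha0 h
  · rw [cumw_eq_one m a ha1 h]

/-- Clamp-difference identity. -/
private lemma clamp_diff (lo hi u v : ℝ) (hlo : lo ≤ hi) (huv : u ≤ v) :
    max 0 (min hi v - max lo u) = min hi (max lo v) - min hi (max lo u) := by
  simp only [min_def, max_def]
  split_ifs <;> linarith

/-- Key summation lemma: sum over a partition of [0,1] of clamped interval lengths. -/
private lemma sum_clamp (n : ℕ) (b : Fin n → ℝ) (hb0 : ∀ j, 0 ≤ b j)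
    (hb1 : ∑ j, b j = 1) (lo hi : ℝ) (hlo : 0 ≤ lo) (hlohi : lo ≤ hi) (hhi : hi ≤ 1) :
    ∑ j : Fin n, max 0 (min hi (cumw n b (j + 1)) - max lo (cumw n b j)) = hi - lo := by
  have key : ∀ j : Fin n,
      max 0 (min hi (cumw n b (j + 1)) - max lo (cumw n b j))
        = min hi (max lo (cumw n b (j + 1))) - min hi (max lo (cumw n b j)) := fun j =>
    clamp_diff lo hi _ _ hlohi (cumw_mono n b hb0 (Nat.le_succ j))
  rw [Finset.sum_congr rfl fun j _ => key j]
  have := Fin.sum_univ_eq_sum_range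
    (fun j => min hi (max lo (cumw n b (j + 1))) - min hi (max lo (cumw n b j))) n
  rw [this, Finset.sum_range_sub (fun j => min hi (max lo (cumw n b j)))]
  rw [cumw_zero, cumw_top n b hb1]
  rw [max_eq_left hlo, max_eq_right (le_trans hlohi hhi), min_eq_right hlohi,
    min_eq_left hhi]

/-- For any weight vectors `a ∈ Δ_m` and `b ∈ Δ_n`, there exists a feasible
transport plan `P` with monotone (non-crossing) support and at most `m + n - 1` nonzero
entries (the northwest-corner / greedy flow-matching plan). -/
theorem exists_monotone_sparse_plan {m n : ℕ}
    (a : Fin m → ℝ) (b : Fin n → ℝ)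
    (ha0 : ∀ i, 0 ≤ a i) (hb0 : ∀ j, 0 ≤ b j)
    (ha1 : ∑ i, a i = 1) (hb1 : ∑ j, b j = 1) :
    ∃ P : Matrix (Fin m) (Fin n) ℝ,
      (∀ i j, 0 ≤ P i j) ∧
      (∀ i, ∑ j, P i j = a i) ∧ (∀ j, ∑ i, P i j = b j) ∧
      (¬ ∃ (i₁ i₂ : Fin m) (j₁ j₂ : Fin n),
        i₁ < i₂ ∧ j₁ < j₂ ∧ 0 < P i₁ j₂ ∧ 0 < P i₂ j₁) ∧
      {q : Fin m × Fin n | P q.1 q.2 ≠ 0}.ncard ≤ m + n - 1 := by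
  classical
  have hm : 0 < m := by
    rcases Nat.eq_zero_or_pos m with h | h
    · subst h; simp at ha1
    · exact h
  have hn : 0 < n := by
    rcases Nat.eq_zero_or_pos n with h | h
    · subst h; simp at hb1
    · exact h
  set A : ℕ → ℝ := cumw m a with hA
  set B : ℕ → ℝ := cumw n b with hB
  have hAmono : Monotone A := cumw_mono m a ha0
  have hBmono : Monotone B := cumw_mono n b hb0
  set P : Matrix (Fin m) (Fin n) ℝ :=
    fun i j => max 0 (min (A (i + 1)) (B (j + 1)) - max (A i) (B j)) with hP
  have hPnn : ∀ i j, 0 ≤ P i j := fun i j => le_max_left _ _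
  have hrow : ∀ i, ∑ j, P i j = a i := by
    intro i
    have := sum_clamp n b hb0 hb1 (A i) (A (i + 1))
      (cumw_nonneg m a ha0 i) (hAmono (Nat.le_succ i))
      (cumw_le_one m a ha0 ha1 (i + 1))
    rw [hP]
    simp only
    rw [this, hA, cumw_succ m a i]
    ring
  have hcol : ∀ j, ∑ i, P i j = b j := by
    intro j
    have key : ∀ i : Fin m, P i j
        = max 0 (min (B (j + 1)) (A (i + 1)) - max (B j) (A i)) := by
      intro i
      rw [hP]
      simp only
      rw [min_comm, max_comm (A (i : ℕ)) (B (j : ℕ))]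
    rw [Finset.sum_congr rfl fun i _ => key i]
    have := sum_clamp m a ha0 ha1 (B j) (B (j + 1))
      (cumw_nonneg n b hb0 j) (hBmono (Nat.le_succ j))
      (cumw_le_one n b hb0 hb1 (j + 1))
    rw [this, hB, cumw_succ n b j]
    ring
  have hcross : ¬ ∃ (i₁ i₂ : Fin m) (j₁ j₂ : Fin n),
      i₁ < i₂ ∧ j₁ < j₂ ∧ 0 < P i₁ j₂ ∧ 0 < P i₂ j₁ := by
    rintro ⟨i₁, i₂, j₁, j₂, hi, hj, h1, h2⟩
    have h1' : 0 < min (A (i₁ + 1)) (B (j₂ + 1)) - max (A i₁) (B j₂) :=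
      (lt_max_iff.mp h1).resolve_left (lt_irrefl 0)
    have h2' : 0 < min (A (i₂ + 1)) (B (j₁ + 1)) - max (A i₂) (B j₁) :=
      (lt_max_iff.mp h2).resolve_left (lt_irrefl 0)
    have e1 : B j₂ < A (i₁ + 1) := by
      have := min_le_left (A (i₁ + 1)) (B (j₂ + 1))
      have := le_max_right (A i₁) (B j₂)
      linarith
    have e2 : A i₂ < B (j₁ + 1) := by
      have := min_le_right (A (i₂ + 1)) (B (j₁ + 1))
      have := le_max_left (A i₂) (B j₁)
      linarith
    have e3 : A (i₁ + 1) ≤ A i₂ := hAmono (by exact_mod_cast hi)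
    have e4 : B (j₁ + 1) ≤ B j₂ := hBmono (by exact_mod_cast hj)
    linarith
  refine ⟨P, hPnn, hrow, hcol, hcross, ?_⟩
  set S : Set (Fin m × Fin n) := {q | P q.1 q.2 ≠ 0} with hS
  have hinj : Set.InjOn (fun q : Fin m × Fin n => (q.1 : ℕ) + q.2) S := by
    rintro ⟨i, j⟩ hq ⟨i', j'⟩ hq' heq
    simp only at heq
    by_contra hne
    have hii : (i : ℕ) ≠ i' := by
      intro h
      apply hne
      have : i = i' := Fin.ext h
      have : j = j' := Fin.ext (by omega)
      simp_all
    have hp1 : 0 < P i j := lt_of_le_of_ne (hPnn i j) (Ne.symm hq)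
    have hp2 : 0 < P i' j' := lt_of_le_of_ne (hPnn i' j') (Ne.symm hq')
    rcases Nat.lt_or_ge (i : ℕ) i' with h | h
    · exact hcross ⟨i, i', j', j, h, by omega, hp1, hp2⟩
    · have h' : (i' : ℕ) < i := by omega
      exact hcross ⟨i', i, j, j', h', by omega, hp2, hp1⟩
  have himg : (fun q : Fin m × Fin n => (q.1 : ℕ) + q.2) '' S ⊆ ↑(Finset.range (m + n - 1)) := by
    rintro x ⟨⟨i, j⟩, _, rfl⟩
    simp only [Finset.coe_range, Set.mem_Iio]
    have := i.2
    have := j.2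
    omega
  calc S.ncard = ((fun q : Fin m × Fin n => (q.1 : ℕ) + q.2) '' S).ncard :=
        (Set.ncard_image_of_injOn hinj).symm
    _ ≤ (↑(Finset.range (m + n - 1)) : Set ℕ).ncard :=
        Set.ncard_le_ncard himg (Finset.finite_toSet _)
    _ = m + n - 1 := by rw [Set.ncard_coe_finset, Finset.card_range]
end

section
/- Let a ∈ Δ_m and b ∈ Δ_n be weight vectors with all entries strictly positive. If P and Q are both feasible transport plans for (a, b) with monotone (non-crossing) support, then P = Q. That is, the greedy (northwest-corner) transport plan is the unique feasible plan with non-crossing support. -/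
private noncomputable def cumT {m n : ℕ} (P : Matrix (Fin m) (Fin n) ℝ) (i j : ℕ) : ℝ :=
  ∑ i' : Fin m, ∑ j' : Fin n, if i'.val < i ∧ j'.val < j then P i' j' else 0

private lemma exists_pos_of_dsum_pos {m n : ℕ} (f : Fin m → Fin n → ℝ)
    (h : 0 < ∑ i, ∑ j, f i j) : ∃ i j, 0 < f i j := by
  have h1 : ∑ i : Fin m, (0 : ℝ) < ∑ i : Fin m, ∑ j, f i j := by simpa using h
  obtain ⟨i, -, hi⟩ := Finset.exists_lt_of_sum_lt h1
  have h2 : ∑ j : Fin n, (0 : ℝ) < ∑ j, f i j := by simpa using hi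
  obtain ⟨j, -, hj⟩ := Finset.exists_lt_of_sum_lt h2
  exact ⟨i, j, hj⟩

private lemma cum_eq {m n : ℕ} (P : Matrix (Fin m) (Fin n) ℝ)
    (hP0 : ∀ i j, 0 ≤ P i j)
    (hPmono : ¬ ∃ (i₁ i₂ : Fin m) (j₁ j₂ : Fin n),
      i₁ < i₂ ∧ j₁ < j₂ ∧ 0 < P i₁ j₂ ∧ 0 < P i₂ j₁) (i j : ℕ) :
    cumT P i j = min (∑ i' : Fin m, if i'.val < i then (∑ j', P i' j') else 0)
      (∑ j' : Fin n, if j'.val < j then (∑ i', P i' j') else 0) := by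
  set A := ∑ i' : Fin m, if i'.val < i then (∑ j', P i' j') else 0 with hA
  set B := ∑ j' : Fin n, if j'.val < j then (∑ i', P i' j') else 0 with hB
  set R := ∑ i' : Fin m, ∑ j' : Fin n, if i'.val < i ∧ j ≤ j'.val then P i' j' else 0 with hR
  set C := ∑ j' : Fin n, ∑ i' : Fin m, if i ≤ i'.val ∧ j'.val < j then P i' j' else 0 with hC
  have hTswap : cumT P i j =
      ∑ j' : Fin n, ∑ i' : Fin m, if i'.val < i ∧ j'.val < j then P i' j' else 0 :=
    by rw [cumT]; exact Finset.sum_comm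
  have hAT : A = cumT P i j + R := by
    rw [hA, cumT, hR, ← Finset.sum_add_distrib]
    refine Finset.sum_congr rfl fun i' _ => ?_
    rw [← Finset.sum_add_distrib]
    by_cases h : i'.val < i
    · simp only [h, if_true, true_and]
      refine Finset.sum_congr rfl fun j' _ => ?_
      split_ifs <;> first | ring1 | (exfalso; omega)
    · simp only [h, if_false, false_and, add_zero]
      simp
  have hBT : B = cumT P i j + C := by
    rw [hB, hTswap, hC, ← Finset.sum_add_distrib]
    refine Finset.sum_congr rfl fun j' _ => ?_
    rw [← Finset.sum_add_distrib]
    by_cases h : j'.val < j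
    · simp only [h, if_true, and_true]
      refine Finset.sum_congr rfl fun i' _ => ?_
      split_ifs <;> first | ring1 | (exfalso; omega)
    · simp only [h, if_false, and_false, add_zero]
      simp
  have hR0 : 0 ≤ R := Finset.sum_nonneg fun i' _ => Finset.sum_nonneg fun j' _ => by
    split_ifs; exacts [hP0 _ _, le_refl 0]
  have hC0 : 0 ≤ C := Finset.sum_nonneg fun j' _ => Finset.sum_nonneg fun i' _ => by
    split_ifs; exacts [hP0 _ _, le_refl 0]
  have hTA : cumT P i j ≤ A := by rw [hAT]; linarith
  have hTB : cumT P i j ≤ B := by rw [hBT]; linarith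
  have hor : cumT P i j = A ∨ cumT P i j = B := by
    by_contra hcon
    push_neg at hcon
    have hRpos : 0 < R := by
      rcases lt_or_eq_of_le hR0 with h | h
      · exact h
      · exfalso; exact hcon.1 (by rw [hAT, ← h, add_zero])
    have hCpos : 0 < C := by
      rcases lt_or_eq_of_le hC0 with h | h
      · exact h
      · exfalso; exact hcon.2 (by rw [hBT, ← h, add_zero])
    obtain ⟨i₁, j₂, h1⟩ := exists_pos_of_dsum_pos _ hRpos
    obtain ⟨j₁, i₂, h2⟩ := exists_pos_of_dsum_pos _ hCpos
    by_cases c1 : i₁.val < i ∧ j ≤ j₂.val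
    · by_cases c2 : i ≤ i₂.val ∧ j₁.val < j
      · rw [if_pos c1] at h1
        rw [if_pos c2] at h2
        exact hPmono ⟨i₁, i₂, j₁, j₂, by omega, by omega, h1, h2⟩
      · rw [if_neg c2] at h2; exact lt_irrefl 0 h2
    · rw [if_neg c1] at h1; exact lt_irrefl 0 h1
  refine le_antisymm (le_min hTA hTB) ?_
  rcases hor with h | h
  · rw [← h] at *; exact min_le_left _ _
  · rw [← h] at *; exact min_le_right _ _

private lemma cum_recover {m n : ℕ} (P : Matrix (Fin m) (Fin n) ℝ) (i : Fin m) (j : Fin n) :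
    P i j = cumT P (i.val + 1) (j.val + 1) - cumT P i.val (j.val + 1)
      - cumT P (i.val + 1) j.val + cumT P i.val j.val := by
  simp only [cumT, ← Finset.sum_sub_distrib, ← Finset.sum_add_distrib]
  have key : ∀ (i' : Fin m) (j' : Fin n),
      (if i'.val < i.val + 1 ∧ j'.val < j.val + 1 then P i' j' else 0)
      - (if i'.val < i.val ∧ j'.val < j.val + 1 then P i' j' else 0)
      - (if i'.val < i.val + 1 ∧ j'.val < j.val then P i' j' else 0)
      + (if i'.val < i.val ∧ j'.val < j.val then P i' j' else 0)
      = if i' = i ∧ j' = j then P i' j' else 0 := by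
    intro i' j'
    simp only [Fin.ext_iff]
    split_ifs <;> first | ring1 | (exfalso; omega)
  rw [Finset.sum_congr rfl fun i' _ => Finset.sum_congr rfl fun j' _ => key i' j']
  simp [ite_and, Finset.sum_ite_eq]

/-- If all entries of the weight vectors `a ∈ Δ_m` and `b ∈ Δ_n` are strictly
positive, then any two feasible transport plans for `(a, b)` with monotone (non-crossing)
support are equal: the greedy northwest-corner plan is the unique non-crossing feasible plan. -/
theorem monotone_plan_unique {m n : ℕ}
    (a : Fin m → ℝ) (b : Fin n → ℝ)
    (ha0 : ∀ i, 0 < a i) (hb0 : ∀ j, 0 < b j)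
    (ha1 : ∑ i, a i = 1) (hb1 : ∑ j, b j = 1)
    (P Q : Matrix (Fin m) (Fin n) ℝ)
    (hP0 : ∀ i j, 0 ≤ P i j)
    (hProw : ∀ i, ∑ j, P i j = a i) (hPcol : ∀ j, ∑ i, P i j = b j)
    (hPmono : ¬ ∃ (i₁ i₂ : Fin m) (j₁ j₂ : Fin n),
      i₁ < i₂ ∧ j₁ < j₂ ∧ 0 < P i₁ j₂ ∧ 0 < P i₂ j₁)
    (hQ0 : ∀ i j, 0 ≤ Q i j)
    (hQrow : ∀ i, ∑ j, Q i j = a i) (hQcol : ∀ j, ∑ i, Q i j = b j)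
    (hQmono : ¬ ∃ (i₁ i₂ : Fin m) (j₁ j₂ : Fin n),
      i₁ < i₂ ∧ j₁ < j₂ ∧ 0 < Q i₁ j₂ ∧ 0 < Q i₂ j₁) :
    P = Q := by
  have hcum : ∀ i j : ℕ, cumT P i j = cumT Q i j := by
    intro i j
    rw [cum_eq P hP0 hPmono, cum_eq Q hQ0 hQmono]
    congr 1
    · exact Finset.sum_congr rfl fun i' _ => by rw [hProw, hQrow]
    · exact Finset.sum_congr rfl fun j' _ => by rw [hPcol, hQcol]
  ext i j
  rw [cum_recover P i j, cum_recover Q i j, hcum, hcum, hcum, hcum]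
end

section
/- Let z, z' : Fin n → ℝ be monotone nondecreasing sequences, and let P be any n × n matrix with nonnegative entries whose every row sum and every column sum equals 1/n (i.e., P is 1/n times a doubly stochastic matrix). Then Σ_{i,j} P_{ij} |z_i − z'_j| ≥ (1/n) Σ_i |z_i − z'_i|. Consequently, the 1-dimensional Earth Mover's Distance between two uniformly weighted point sets of equal size n equals (1/n) Σ_i |z_{(i)} − z'_{(i)}|, the average distance between sorted matched pairs. -/
/-! Writing `|a - b|` as the length of the set of thresholds `t` separating `a` and `b`, i.e.
`|a - b| = ∫ t, |𝟙[a ≤ t] - 𝟙[b ≤ t]|`, reduces the inequality to its pointwise version for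
the `0/1` sequences `x i = 𝟙[z i ≤ t]` and `y j = 𝟙[z' j ≤ t]`. For these, monotonicity forces
`x ≤ y` or `y ≤ x`, so `∑ i, |x i - y i| = |∑ i, x i - ∑ i, y i|`; and the marginal conditions
give `∑ i, ∑ j, P i j * (x i - y j) = (1 / n) * (∑ i, x i - ∑ i, y i)`, whence the triangle
inequality concludes. -/

open MeasureTheory Set

lemma abs_indicator_Ici_sub_indicator_Ici (a b t : ℝ) :
    |(Ici a).indicator (1 : ℝ → ℝ) t - (Ici b).indicator 1 t|
      = (Ico (min a b) (max a b)).indicator 1 t := by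
  wlog hab : a ≤ b generalizing a b
  · simpa [abs_sub_comm, min_comm, max_comm] using this b a (le_of_not_ge hab)
  rw [min_eq_left hab, max_eq_right hab, ← Ici_sdiff_Ici,
    indicator_sdiff (Ici_subset_Ici.2 hab), Pi.sub_apply, abs_of_nonneg]
  exact sub_nonneg.2 <|
    indicator_le_indicator_of_subset (Ici_subset_Ici.2 hab) (zero_le_one : (0 : ℝ → ℝ) ≤ 1) t

lemma integrable_abs_indicator_Ici_sub (a b : ℝ) :
    Integrable fun t => |(Ici a).indicator (1 : ℝ → ℝ) t - (Ici b).indicator 1 t| := by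
  simp_rw [abs_indicator_Ici_sub_indicator_Ici]
  exact (integrable_indicator_iff measurableSet_Ico).2 (integrableOn_const (by simp))

lemma integral_abs_indicator_Ici_sub (a b : ℝ) :
    ∫ t, |(Ici a).indicator (1 : ℝ → ℝ) t - (Ici b).indicator 1 t| = |a - b| := by
  simp_rw [abs_indicator_Ici_sub_indicator_Ici]
  rw [integral_indicator_one measurableSet_Ico, Real.volume_real_Ico_of_le min_le_max,
    max_sub_min_eq_abs']

section LayerCake

variable {κ : Type*} [Fintype κ] (w a b : κ → ℝ)

lemma integrable_sum_mul_abs_indicator_Ici_sub :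
    Integrable fun t =>
      ∑ k, w k * |(Ici (a k)).indicator (1 : ℝ → ℝ) t - (Ici (b k)).indicator 1 t| :=
  integrable_finsetSum _ fun k _ => (integrable_abs_indicator_Ici_sub (a k) (b k)).const_mul _

lemma sum_mul_abs_sub_eq_integral :
    ∑ k, w k * |a k - b k|
      = ∫ t, ∑ k, w k * |(Ici (a k)).indicator (1 : ℝ → ℝ) t - (Ici (b k)).indicator 1 t| := by
  rw [integral_finsetSum _ fun k _ =>
    (integrable_abs_indicator_Ici_sub (a k) (b k)).const_mul _]
  simp_rw [integral_const_mul, integral_abs_indicator_Ici_sub]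

end LayerCake

lemma abs_mul_sum_sub_sum_le_sum_sum_mul_abs_sub {ι κ : Type*} [Fintype ι] [Fintype κ]
    (P : Matrix ι κ ℝ) (c : ℝ) (hP0 : ∀ i j, 0 ≤ P i j)
    (hrow : ∀ i, ∑ j, P i j = c) (hcol : ∀ j, ∑ i, P i j = c) (x : ι → ℝ) (y : κ → ℝ) :
    |c * (∑ i, x i - ∑ j, y j)| ≤ ∑ i, ∑ j, P i j * |x i - y j| := by
  have transport : c * (∑ i, x i - ∑ j, y j) = ∑ i, ∑ j, P i j * (x i - y j) := by
    simp_rw [mul_sub, Finset.sum_sub_distrib, ← Finset.sum_mul, hrow]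
    rw [Finset.sum_comm (f := fun i j => P i j * y j)]
    simp_rw [← Finset.sum_mul, hcol, Finset.mul_sum]
  rw [transport]
  refine (Finset.abs_sum_le_sum_abs _ _).trans (Finset.sum_le_sum fun i _ => ?_)
  refine (Finset.abs_sum_le_sum_abs _ _).trans (Finset.sum_le_sum fun j _ => ?_)
  rw [abs_mul, abs_of_nonneg (hP0 i j)]

lemma sum_abs_sub_eq_abs_sum_sub_sum {ι : Type*} [Fintype ι] {x y : ι → ℝ}
    (h : x ≤ y ∨ y ≤ x) : ∑ i, |x i - y i| = |∑ i, x i - ∑ i, y i| := by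
  wlog hxy : x ≤ y generalizing x y
  · simpa [abs_sub_comm] using this h.symm (h.resolve_left hxy)
  rw [abs_of_nonpos (sub_nonpos.2 (Finset.sum_le_sum fun i _ => hxy i)), neg_sub,
    ← Finset.sum_sub_distrib]
  exact Finset.sum_congr rfl fun i _ => by rw [abs_of_nonpos (sub_nonpos.2 (hxy i)), neg_sub]

lemma Monotone.indicator_Ici_le_total {ι α : Type*} [LinearOrder ι] [LinearOrder α]
    {z z' : ι → α} (hz : Monotone z) (hz' : Monotone z') (t : α) :
    (fun i => (Ici (z i)).indicator (1 : α → ℝ) t) ≤ (fun i => (Ici (z' i)).indicator 1 t) ∨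
      (fun i => (Ici (z' i)).indicator (1 : α → ℝ) t) ≤ (fun i => (Ici (z i)).indicator 1 t) := by
  have eq_indicator_preimage : ∀ w : ι → α,
      (fun i => (Ici (w i)).indicator (1 : α → ℝ) t) = (w ⁻¹' Iic t).indicator 1 := by
    intro w; ext i; by_cases h : w i ≤ t <;> simp [h]
  simp only [eq_indicator_preimage]
  rcases ((isLowerSet_Iic t).preimage hz).total ((isLowerSet_Iic t).preimage hz') with h | h
  · exact .inl (indicator_le_indicator_of_subset h zero_le_one)
  · exact .inr (indicator_le_indicator_of_subset h zero_le_one)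

/-- For monotone nondecreasing sequences `z, z' : Fin n → ℝ` and any matrix `P`
with nonnegative entries whose row sums and column sums all equal `1/n`, the transport cost
`Σ_{i,j} P i j * |z i - z' j|` is at least `(1/n) Σ_i |z i - z' i|`; hence the 1-dimensional
EMD between two uniformly weighted point sets of equal size equals the average distance
between sorted matched pairs. -/
theorem oneDim_emd_sorted_matching {n : ℕ}
    (z z' : Fin n → ℝ) (hz : Monotone z) (hz' : Monotone z')
    (P : Matrix (Fin n) (Fin n) ℝ)
    (hP0 : ∀ i j, 0 ≤ P i j)
    (hProw : ∀ i, ∑ j, P i j = 1 / (n : ℝ)) (hPcol : ∀ j, ∑ i, P i j = 1 / (n : ℝ)) :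
    (1 / (n : ℝ)) * ∑ i, |z i - z' i| ≤ ∑ i, ∑ j, P i j * |z i - z' j| := by
  have pointwise : ∀ t : ℝ,
      ∑ i, 1 / (n : ℝ) * |(Ici (z i)).indicator 1 t - (Ici (z' i)).indicator 1 t|
        ≤ ∑ p : Fin n × Fin n,
            P p.1 p.2 * |(Ici (z p.1)).indicator 1 t - (Ici (z' p.2)).indicator 1 t| := by
    intro t
    rw [← Finset.mul_sum, sum_abs_sub_eq_abs_sum_sub_sum (hz.indicator_Ici_le_total hz' t),
      ← abs_of_nonneg (by positivity : (0 : ℝ) ≤ 1 / n), ← abs_mul, Fintype.sum_prod_type]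
    exact abs_mul_sum_sub_sum_le_sum_sum_mul_abs_sub P _ hP0 hProw hPcol _ _
  calc (1 / (n : ℝ)) * ∑ i, |z i - z' i|
      = ∑ i, 1 / (n : ℝ) * |z i - z' i| := Finset.mul_sum _ _ _
    _ = ∫ t, ∑ i, 1 / (n : ℝ) * |(Ici (z i)).indicator 1 t - (Ici (z' i)).indicator 1 t| :=
        sum_mul_abs_sub_eq_integral _ _ _
    _ ≤ ∫ t, ∑ p : Fin n × Fin n,
          P p.1 p.2 * |(Ici (z p.1)).indicator 1 t - (Ici (z' p.2)).indicator 1 t| :=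
        integral_mono (integrable_sum_mul_abs_indicator_Ici_sub _ _ _)
          (integrable_sum_mul_abs_indicator_Ici_sub _ _ _) pointwise
    _ = ∑ p : Fin n × Fin n, P p.1 p.2 * |z p.1 - z' p.2| :=
        (sum_mul_abs_sub_eq_integral _ _ _).symm
    _ = ∑ i, ∑ j, P i j * |z i - z' j| := Fintype.sum_prod_type _
end

section
/- Let U(a, b) be the transport polytope for a ∈ Δ_m, b ∈ Δ_n, let V(D) = min_{P ∈ U(a,b)} ⟨P, D⟩, and let D : ℝ^k → ℝ^{m×n} be a map of network parameters to cost matrices that is Fréchet differentiable at θ₀. If the minimizer P* of ⟨P, D(θ₀)⟩ over U(a,b) is unique, then the composite θ ↦ V(D(θ)) is differentiable at θ₀ with derivative h ↦ ⟨P*, (fderiv D at θ₀)(h)⟩; i.e., the gradient of the EMD loss with respect to the parameters is obtained by treating the optimal flow matrix P* as a constant and applying the chain rule through the cost matrix. -/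
/-!
`V` is a minimum of linear functions of the cost, so `V E ≤ ⟨P*, E⟩` with equality at
`E₀ = D θ₀`, while a minimizer `P_E` at `E` gives `V E - V E₀ ≥ ⟨P_E, E - E₀⟩`. The two bounds
differ by `⟨P_E - P*, E - E₀⟩`, which is `o(‖E - E₀‖)` because, by compactness of the transport
polytope and uniqueness of `P*`, the minimizers `P_E` converge to `P*`. Hence `V` has derivative
`⟨P*, ·⟩` at `E₀`, and the chain rule through `D` finishes.
-/

attribute [local instance] Matrix.normedAddCommGroup Matrix.normedSpace

open Filter Topology Asymptotics

theorem IsMinOn.csInf_image_eq {α β : Type*} [ConditionallyCompleteLinearOrder β] {f : α → β}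
    {K : Set α} {x : α} (hx : x ∈ K) (h : IsMinOn f K x) : sInf (f '' K) = f x :=
  IsLeast.csInf_eq ⟨Set.mem_image_of_mem f hx, by rintro _ ⟨y, hy, rfl⟩; exact h hy⟩

theorem IsCompact.isMinOn_iff_eq_csInf_image {α β : Type*} [TopologicalSpace α]
    [ConditionallyCompleteLinearOrder β] [TopologicalSpace β] [ClosedIicTopology β] {f : α → β}
    {K : Set α} {x : α} (hK : IsCompact K) (hf : ContinuousOn f K) (hx : x ∈ K) :
    IsMinOn f K x ↔ f x = sInf (f '' K) :=
  ⟨fun h => (h.csInf_image_eq hx).symm, fun h _ hy =>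
    h.trans_le (csInf_le (hK.bddBelow_image hf) (Set.mem_image_of_mem f hy))⟩

theorem IsCompact.tendsto_nhds_of_isMinOn_of_unique {X Y α : Type*} [TopologicalSpace X]
    [TopologicalSpace Y] [LinearOrder α] [TopologicalSpace α] [OrderClosedTopology α]
    {f : Y → X → α} {K : Set X} (hK : IsCompact K) (hf : Continuous ↿f) {y₀ : Y} {x₀ : X}
    (huniq : ∀ x ∈ K, IsMinOn (f y₀) K x → x = x₀) {sel : Y → X} (hsel : ∀ y, sel y ∈ K)
    (hmin : ∀ y, IsMinOn (f y) K (sel y)) : Tendsto sel (𝓝 y₀) (𝓝 x₀) := by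
  refine hK.tendsto_nhds_of_unique_mapClusterPt (Eventually.of_forall hsel) fun x hxK hx => ?_
  refine huniq x hxK fun z hz => ?_
  have hgraph : MapClusterPt (y₀, x) (𝓝 y₀) fun y => (y, sel y) := by
    rw [((𝓝 y₀).basis_sets.prod_nhds (𝓝 x).basis_sets).mapClusterPt_iff_frequently]
    rintro ⟨s, t⟩ ⟨hs, ht⟩
    exact ((hx.frequently ht).and_eventually hs).mono fun y h => ⟨h.2, h.1⟩
  have hclosed : IsClosed {p : Y × X | f p.1 p.2 ≤ f p.1 z} :=
    isClosed_le hf (hf.comp (continuous_fst.prodMk continuous_const))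
  exact hclosed.mem_of_mapClusterPt hgraph (Eventually.of_forall fun y => hmin y hz)

section Envelope

variable {E F : Type*} [NormedAddCommGroup E] [NormedSpace ℝ E] [NormedAddCommGroup F]
  [NormedSpace ℝ F] (B : E →L[ℝ] F →L[ℝ] ℝ) {K : Set E}

theorem abs_envelope_remainder_le {x x₀ : E} {y y₀ : F} (hx : x ∈ K) (hx₀ : x₀ ∈ K)
    (hmin : IsMinOn (fun x => B x y) K x) (hmin₀ : IsMinOn (fun x => B x y₀) K x₀) :
    |B x y - B x₀ y₀ - B x₀ (y - y₀)| ≤ ‖B‖ * ‖x - x₀‖ * ‖y - y₀‖ := by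
  have hle : B x y ≤ B x₀ y := hmin hx₀
  have hle₀ : B x₀ y₀ ≤ B x y₀ := hmin₀ hx
  have hcross : |B (x - x₀) (y - y₀)| ≤ ‖B‖ * ‖x - x₀‖ * ‖y - y₀‖ := B.le_opNorm₂ _ _
  have hbound_nonneg : 0 ≤ ‖B‖ * ‖x - x₀‖ * ‖y - y₀‖ := by positivity
  simp only [map_sub, sub_apply] at hcross ⊢
  rw [abs_le] at hcross ⊢
  constructor <;> linarith

/-- Danskin's theorem for a continuous bilinear pairing. -/
theorem hasFDerivAt_sInf_image_of_unique_isMinOn (hK : IsCompact K) {x₀ : E} {y₀ : F}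
    (hx₀ : x₀ ∈ K) (hmin₀ : IsMinOn (fun x => B x y₀) K x₀)
    (huniq : ∀ x ∈ K, IsMinOn (fun x => B x y₀) K x → x = x₀) :
    HasFDerivAt (fun y => sInf ((fun x => B x y) '' K)) (B x₀) y₀ := by
  have hcont : Continuous fun p : F × E => B p.2 p.1 := B.continuous₂.comp continuous_swap
  choose sel hsel hmin using fun y : F =>
    hK.exists_isMinOn (f := fun x => B x y) ⟨x₀, hx₀⟩ (by fun_prop)
  have hsel_tendsto : Tendsto sel (𝓝 y₀) (𝓝 x₀) :=
    hK.tendsto_nhds_of_isMinOn_of_unique hcont huniq hsel hmin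
  rw [hasFDerivAt_iff_isLittleO, isLittleO_iff]
  intro c hc
  have hsel_close : ∀ᶠ y in 𝓝 y₀, ‖B‖ * ‖sel y - x₀‖ < c := by
    have := ((tendsto_iff_norm_sub_tendsto_zero.1 hsel_tendsto).const_mul ‖B‖)
    rw [mul_zero] at this
    exact this.eventually (gt_mem_nhds hc)
  filter_upwards [hsel_close] with y hy
  rw [(hmin y).csInf_image_eq (hsel y), hmin₀.csInf_image_eq hx₀, Real.norm_eq_abs]
  calc |B (sel y) y - B x₀ y₀ - B x₀ (y - y₀)| ≤ ‖B‖ * ‖sel y - x₀‖ * ‖y - y₀‖ :=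
        abs_envelope_remainder_le B (hsel y) hx₀ (hmin y) hmin₀
    _ ≤ c * ‖y - y₀‖ := by gcongr

end Envelope

section Transport

variable {m n : Type*} [Fintype m] [Fintype n]

-- Irreducible, so that unification never unfolds the finite-dimensional
-- `LinearMap.toContinuousLinearMap`; `frobeniusPairing_apply` is the interface.
@[irreducible]
noncomputable def frobeniusPairing : Matrix m n ℝ →L[ℝ] Matrix m n ℝ →L[ℝ] ℝ :=
  LinearMap.toContinuousLinearMap <|
    (LinearMap.toContinuousLinearMap : (Matrix m n ℝ →ₗ[ℝ] ℝ) ≃ₗ[ℝ] _).toLinearMap ∘ₗ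
      LinearMap.mk₂ ℝ (fun P E => ∑ i, ∑ j, P i j * E i j)
        (by simp [add_mul, Finset.sum_add_distrib])
        (by simp [Finset.mul_sum, mul_assoc])
        (by simp [mul_add, Finset.sum_add_distrib])
        (by simp [Finset.mul_sum, mul_left_comm])

@[simp]
theorem frobeniusPairing_apply (P E : Matrix m n ℝ) :
    frobeniusPairing P E = ∑ i, ∑ j, P i j * E i j := by
  rw [frobeniusPairing]; rfl

def transportPolytope (a : m → ℝ) (b : n → ℝ) : Set (Matrix m n ℝ) :=
  {P | (∀ i j, 0 ≤ P i j) ∧ (∀ i, ∑ j, P i j = a i) ∧ (∀ j, ∑ i, P i j = b j)}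

theorem isClosed_transportPolytope (a : m → ℝ) (b : n → ℝ) :
    IsClosed (transportPolytope a b) := by
  simp only [transportPolytope, Set.ofPred_and, Set.ofPred_forall]
  refine .inter (isClosed_iInter fun i => isClosed_iInter fun j => ?_)
    (.inter (isClosed_iInter fun i => ?_) (isClosed_iInter fun j => ?_))
  · exact isClosed_le continuous_const (by fun_prop)
  · exact isClosed_eq (by fun_prop) continuous_const
  · exact isClosed_eq (by fun_prop) continuous_const

theorem norm_le_of_mem_transportPolytope {a : m → ℝ} {b : n → ℝ} {P : Matrix m n ℝ}
    (hP : P ∈ transportPolytope a b) : ‖P‖ ≤ ‖a‖ := by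
  obtain ⟨hP0, hrow, -⟩ := hP
  refine (Matrix.norm_le_iff (norm_nonneg a)).2 fun i j => ?_
  calc ‖P i j‖ = P i j := Real.norm_of_nonneg (hP0 i j)
    _ ≤ ∑ j', P i j' := Finset.single_le_sum (fun j' _ => hP0 i j') (Finset.mem_univ j)
    _ = a i := hrow i
    _ ≤ ‖a‖ := (Real.le_norm_self _).trans (norm_le_pi_norm a i)

theorem isCompact_transportPolytope (a : m → ℝ) (b : n → ℝ) :
    IsCompact (transportPolytope a b) :=
  Metric.isCompact_of_isClosed_isBounded (isClosed_transportPolytope a b)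
    (isBounded_iff_forall_norm_le.2 ⟨‖a‖, fun _ => norm_le_of_mem_transportPolytope⟩)

end Transport

theorem transport_value_chain_rule_general {m n k : ℕ}
    (a : Fin m → ℝ) (b : Fin n → ℝ)
    (U : Set (Matrix (Fin m) (Fin n) ℝ))
    (hU : U = {P | (∀ i j, 0 ≤ P i j) ∧ (∀ i, ∑ j, P i j = a i) ∧ (∀ j, ∑ i, P i j = b j)})
    (V : Matrix (Fin m) (Fin n) ℝ → ℝ)
    (hV : ∀ D, V D = sInf ((fun P => ∑ i, ∑ j, P i j * D i j) '' U))
    (D : (Fin k → ℝ) → Matrix (Fin m) (Fin n) ℝ) (θ₀ : Fin k → ℝ)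
    (hD : DifferentiableAt ℝ D θ₀)
    (Pstar : Matrix (Fin m) (Fin n) ℝ) (hPstar : Pstar ∈ U)
    (hmin : (∑ i, ∑ j, Pstar i j * D θ₀ i j) = V (D θ₀))
    (huniq : ∀ Q ∈ U, (∑ i, ∑ j, Q i j * D θ₀ i j) = V (D θ₀) → Q = Pstar) :
    ∃ f : (Fin k → ℝ) →L[ℝ] ℝ,
      (∀ h : Fin k → ℝ, f h = ∑ i, ∑ j, Pstar i j * fderiv ℝ D θ₀ h i j) ∧
      HasFDerivAt (fun θ => V (D θ)) f θ₀ := by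
  have hUc : IsCompact U := hU ▸ isCompact_transportPolytope a b
  have hV' : V = fun E => sInf ((fun P => frobeniusPairing P E) '' U) := by
    simp only [frobeniusPairing_apply]
    exact funext hV
  rw [hV'] at hmin huniq ⊢
  simp only [← frobeniusPairing_apply] at hmin huniq
  have hmin_iff : ∀ Q ∈ U, IsMinOn (fun P => frobeniusPairing P (D θ₀)) U Q ↔
      frobeniusPairing Q (D θ₀) = sInf ((fun P => frobeniusPairing P (D θ₀)) '' U) :=
    fun Q hQ => hUc.isMinOn_iff_eq_csInf_image (by fun_prop) hQ
  have hdanskin := hasFDerivAt_sInf_image_of_unique_isMinOn frobeniusPairing hUc hPstar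
    ((hmin_iff Pstar hPstar).2 hmin) fun Q hQ hQmin => huniq Q hQ ((hmin_iff Q hQ).1 hQmin)
  exact ⟨_, fun h => frobeniusPairing_apply Pstar _, hdanskin.comp θ₀ hD.hasFDerivAt⟩

/-- Let `V(D) = min_{P ∈ U(a,b)} ⟨P, D⟩` and let `D : ℝ^k → ℝ^{m×n}` be
Fréchet differentiable at `θ₀`. If the minimizer `P*` of `⟨P, D(θ₀)⟩` over `U(a,b)` is
unique, then `θ ↦ V(D(θ))` is differentiable at `θ₀` with derivative
`h ↦ ⟨P*, (fderiv D θ₀) h⟩`: the gradient of the EMD loss w.r.t. the parameters is obtained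
by treating `P*` as a constant and applying the chain rule through the cost matrix. -/
theorem transport_value_chain_rule {m n k : ℕ}
    (a : Fin m → ℝ) (b : Fin n → ℝ)
    (ha0 : ∀ i, 0 ≤ a i) (hb0 : ∀ j, 0 ≤ b j)
    (ha1 : ∑ i, a i = 1) (hb1 : ∑ j, b j = 1)
    (U : Set (Matrix (Fin m) (Fin n) ℝ))
    (hU : U = {P | (∀ i j, 0 ≤ P i j) ∧ (∀ i, ∑ j, P i j = a i) ∧ (∀ j, ∑ i, P i j = b j)})
    (V : Matrix (Fin m) (Fin n) ℝ → ℝ)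
    (hV : ∀ D, V D = sInf ((fun P => ∑ i, ∑ j, P i j * D i j) '' U))
    (D : (Fin k → ℝ) → Matrix (Fin m) (Fin n) ℝ) (θ₀ : Fin k → ℝ)
    (hD : DifferentiableAt ℝ D θ₀)
    (Pstar : Matrix (Fin m) (Fin n) ℝ) (hPstar : Pstar ∈ U)
    (hmin : (∑ i, ∑ j, Pstar i j * D θ₀ i j) = V (D θ₀))
    (huniq : ∀ Q ∈ U, (∑ i, ∑ j, Q i j * D θ₀ i j) = V (D θ₀) → Q = Pstar) :
    ∃ f : (Fin k → ℝ) →L[ℝ] ℝ,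
      (∀ h : Fin k → ℝ, f h = ∑ i, ∑ j, Pstar i j * fderiv ℝ D θ₀ h i j) ∧
      HasFDerivAt (fun θ => V (D θ)) f θ₀ :=
  transport_value_chain_rule_general a b U hU V hV D θ₀ hD Pstar hPstar hmin huniq
end
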